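/- arXiv:0709.2973 — 11 statements merged into one kernel-verified Lean document; each statement's English description precedes it below -/
import Mathlib

section
/- Let Θ = (α, β, γ) be an autotopism of a Latin square L of order n. Suppose i lies in a cycle of α of length r, j lies in a cycle of β of length s, and l_{i,j} lies in a cycle of γ of length t, with r ≠ s. Then t does not divide any positive multiple of r that is strictly smaller than lcm(r, s). -/
open Classical

/-- Number of cycles of length `r` in the disjoint cycle decomposition of `δ`
(fixed points count as cycles of length 1). -/
noncomputable def cyclesOfLen {n : ℕ} (δ : Equiv.Perm (Fin n)) (r : ℕ) : ℕ :=
  (Finset.univ.filter fun x : Fin n => Function.minimalPeriod (⇑δ) x = r).card / r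

/-- `L` is (the table of) a Latin square of order `n`. -/
def IsLatinSquare {n : ℕ} (L : Fin n → Fin n → Fin n) : Prop :=
  (∀ i, Function.Bijective (L i)) ∧ ∀ j, Function.Bijective fun i => L i j

/-- `(α, β, γ)` is an autotopism of `L`: `(i,j,k) ∈ L → (α i, β j, γ k) ∈ L`. -/
def IsAutotopism {n : ℕ} (L : Fin n → Fin n → Fin n)
    (α β γ : Equiv.Perm (Fin n)) : Prop :=
  ∀ i j, L (α i) (β j) = γ (L i j)

theorem stmt2 {n : ℕ} (L : Fin n → Fin n → Fin n) (α β γ : Equiv.Perm (Fin n))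
    (hL : IsLatinSquare L) (hA : IsAutotopism L α β γ) (i j : Fin n) (r s t : ℕ)
    (hr : Function.minimalPeriod (⇑α) i = r) (hs : Function.minimalPeriod (⇑β) j = s)
    (ht : Function.minimalPeriod (⇑γ) (L i j) = t) (hrs : r ≠ s) :
    ∀ m : ℕ, 0 < m → r ∣ m → m < Nat.lcm r s → ¬ t ∣ m := by
  intro m hm hrm hlt htm
  have key : ∀ k : ℕ, L ((⇑α)^[k] i) ((⇑β)^[k] j) = (⇑γ)^[k] (L i j) := by
    intro k
    induction k with
    | zero => rfl
    | succ k ih =>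
      simp only [Function.iterate_succ', Function.comp_apply]; rw [hA, ih]
  have hαm : (⇑α)^[m] i = i := by
    have := (Function.isPeriodicPt_iff_minimalPeriod_dvd.mpr (hr ▸ hrm))
    exact this
  have hγm : (⇑γ)^[m] (L i j) = L i j :=
    Function.isPeriodicPt_iff_minimalPeriod_dvd.mpr (ht ▸ htm)
  have := key m
  rw [hαm, hγm] at this
  have hβm : (⇑β)^[m] j = j := (hL.1 i).1 this
  have hsm : s ∣ m := hs ▸ Function.IsPeriodicPt.minimalPeriod_dvd hβm
  exact absurd hlt (not_lt.mpr (Nat.le_of_dvd hm (Nat.lcm_dvd hrm hsm)))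
end

section
/- Let Θ = (α, β, γ) be an autotopism of a Latin square L of order n. Suppose i lies in a cycle of α of length r, j lies in a cycle of β of length s, gcd(r,s) = 1, and l_{i,j} lies in a cycle of γ of length t. Then t = r·s. -/
open Classical

theorem stmt3 {n : ℕ} (L : Fin n → Fin n → Fin n) (α β γ : Equiv.Perm (Fin n))
    (hL : IsLatinSquare L) (hA : IsAutotopism L α β γ) (i j : Fin n) (r s t : ℕ)
    (hr : Function.minimalPeriod (⇑α) i = r) (hs : Function.minimalPeriod (⇑β) j = s)
    (ht : Function.minimalPeriod (⇑γ) (L i j) = t) (hrs : Nat.gcd r s = 1) :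
    t = r * s := by
  -- Key iteration identity
  have key : ∀ m : ℕ, (⇑γ)^[m] (L i j) = L ((⇑α)^[m] i) ((⇑β)^[m] j) := by
    intro m
    induction m with
    | zero => rfl
    | succ m ih =>
      rw [Function.iterate_succ_apply', Function.iterate_succ_apply',
        Function.iterate_succ_apply', ih, ← hA]
  -- periodicity transfer
  have hdvd : ∀ m : ℕ, r ∣ m → s ∣ m → t ∣ m := by
    intro m hrm hsm
    have hαm : Function.IsPeriodicPt (⇑α) m i := by
      rw [← hr] at hrm
      exact (Function.isPeriodicPt_iff_minimalPeriod_dvd).mpr hrm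
    have hβm : Function.IsPeriodicPt (⇑β) m j := by
      rw [← hs] at hsm
      exact (Function.isPeriodicPt_iff_minimalPeriod_dvd).mpr hsm
    have : Function.IsPeriodicPt (⇑γ) m (L i j) := by
      unfold Function.IsPeriodicPt Function.IsFixedPt
      rw [key m, hαm, hβm]
    rw [← ht]
    exact this.minimalPeriod_dvd
  have ht_rs : t ∣ r * s := hdvd (r * s) ⟨s, rfl⟩ ⟨r, Nat.mul_comm r s⟩
  -- periodicity facts for t
  have hγt : Function.IsPeriodicPt (⇑γ) t (L i j) := by
    rw [← ht]; exact Function.isPeriodicPt_minimalPeriod _ _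
  have hαr : Function.IsPeriodicPt (⇑α) r i := by
    rw [← hr]; exact Function.isPeriodicPt_minimalPeriod _ _
  have hβs : Function.IsPeriodicPt (⇑β) s j := by
    rw [← hs]; exact Function.isPeriodicPt_minimalPeriod _ _
  have hcop : Nat.Coprime r s := hrs
  -- s ∣ t
  have hst : s ∣ t := by
    have hγtr : Function.IsPeriodicPt (⇑γ) (t * r) (L i j) := hγt.mul_const r
    have hαtr : Function.IsPeriodicPt (⇑α) (t * r) i := hαr.const_mul t
    have : L i ((⇑β)^[t * r] j) = L i j := by
      have := key (t * r)
      rw [hγtr, hαtr] at this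
      exact this.symm
    have hβtr : (⇑β)^[t * r] j = j := (hL.1 i).injective this
    have : s ∣ t * r := by
      rw [← hs]
      exact Function.IsPeriodicPt.minimalPeriod_dvd hβtr
    exact (Nat.Coprime.dvd_of_dvd_mul_right hcop.symm this)
  -- r ∣ t
  have hrt : r ∣ t := by
    have hγts : Function.IsPeriodicPt (⇑γ) (t * s) (L i j) := hγt.mul_const s
    have hβts : Function.IsPeriodicPt (⇑β) (t * s) j := hβs.const_mul t
    have : (fun i' => L i' j) ((⇑α)^[t * s] i) = (fun i' => L i' j) i := by
      have := key (t * s)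
      rw [hγts, hβts] at this
      exact this.symm
    have hαts : (⇑α)^[t * s] i = i := (hL.2 j).injective this
    have : r ∣ t * s := by
      rw [← hr]
      exact Function.IsPeriodicPt.minimalPeriod_dvd hαts
    exact (Nat.Coprime.dvd_of_dvd_mul_right hcop this)
  exact Nat.dvd_antisymm ht_rs (hcop.mul_dvd_of_dvd_of_dvd hrt hst)
end

section
/- If Θ = (α, α, α) is an autotopism of some Latin square of order n where α is a single n-cycle, then n is odd. -/
/-!
Enumerating the points along the cycle identifies `α` with `k ↦ k + 1` on `ZMod n`, and the square
with a table `M` satisfying `M (a + t) (b + t) = M a b + t`. Hence `M 0 b = M (-b) 0 + b`; summing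
over `b`, where both `b ↦ M 0 b` and `b ↦ M (-b) 0` are bijections, gives `∑ b, b = 0` in `ZMod n`.
For `n = 2m` that sum is `m (2m - 1) = -m ≠ 0`.
-/

open Classical

open Finset Function

theorem ZMod.sum_univ_eq_sum_range (n : ℕ) [NeZero n] :
    ∑ x : ZMod n, x = ((∑ i ∈ range n, i : ℕ) : ZMod n) := by
  obtain ⟨k, rfl⟩ : ∃ k, n = k + 1 := Nat.exists_eq_succ_of_ne_zero (NeZero.ne n)
  rw [Nat.cast_sum, ← Fin.sum_univ_eq_sum_range]
  exact Fintype.sum_congr _ _ fun x => (ZMod.natCast_zmod_val x).symm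

theorem ZMod.sum_univ_ne_zero_of_even {n : ℕ} [NeZero n] (hn : Even n) :
    ∑ x : ZMod n, x ≠ 0 := by
  obtain ⟨m, rfl⟩ := hn
  have hm : 0 < m := by have := NeZero.ne (m + m); omega
  have hgauss : ∑ i ∈ range (m + m), i = m * (m + m - 1) := by
    rw [sum_range_id, ← two_mul, mul_assoc, Nat.mul_div_cancel_left _ two_pos]
  rw [ZMod.sum_univ_eq_sum_range, hgauss, Nat.cast_mul, Nat.cast_sub (by omega),
    ZMod.natCast_self, Nat.cast_one, zero_sub, mul_neg_one, neg_ne_zero, Ne,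
    ZMod.natCast_eq_zero_iff]
  exact fun h => by have := Nat.le_of_dvd hm h; omega

theorem ZMod.map_add_add_of_map_add_one {n : ℕ} [NeZero n] {M : ZMod n → ZMod n → ZMod n}
    (hM : ∀ a b, M (a + 1) (b + 1) = M a b + 1) (a b t : ZMod n) :
    M (a + t) (b + t) = M a b + t := by
  obtain ⟨k, rfl⟩ := ZMod.natCast_zmod_surjective t
  induction k with
  | zero => simp
  | succ k ih => rw [Nat.cast_succ, ← add_assoc, ← add_assoc, hM, ih, add_assoc]

theorem sum_univ_eq_zero_of_map_add_add {G : Type*} [AddCommGroup G] [Fintype G]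
    (M : G → G → G) (hrow : Bijective (M 0)) (hcol : Bijective (M · 0))
    (hM : ∀ a b t, M (a + t) (b + t) = M a b + t) : ∑ g : G, g = 0 := by
  have hrow_eq : ∀ b, M 0 b = M (-b) 0 + b := fun b => by simpa using hM (-b) 0 b
  have h : ∑ g : G, g = ∑ g : G, g + ∑ g : G, g := calc
    _ = ∑ b, M 0 b := (hrow.sum_comp id).symm
    _ = ∑ b, M (-b) 0 + ∑ b, b := by
      rw [← sum_add_distrib]; exact sum_congr rfl fun b _ => hrow_eq b
    _ = ∑ g : G, g + ∑ g : G, g := by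
      congr 1; exact (hcol.comp neg_involutive.bijective).sum_comp id
  exact left_eq_add.mp h

theorem pow_val_eq_pow_of_natCast_eq {M : Type*} [Monoid M] {g : M} {n : ℕ}
    (hg : orderOf g = n) {k : ZMod n} {i : ℕ} (h : (i : ZMod n) = k) : g ^ k.val = g ^ i := by
  rw [← h, ZMod.val_natCast, ← hg, pow_mod_orderOf]

theorem Equiv.Perm.IsCycle.exists_equiv_zmod {X : Type*} [Fintype X] [DecidableEq X]
    {α : Equiv.Perm X} {n : ℕ} (hc : α.IsCycle) (hcard : #α.support = n)
    (hX : Fintype.card X = n) : ∃ e : ZMod n ≃ X, ∀ k, e (k + 1) = α (e k) := by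
  obtain ⟨x₀, hx₀⟩ := hc.nonempty_support
  have : NeZero n := ⟨by rintro rfl; exact (Fintype.card_eq_zero_iff.mp hX).elim x₀⟩
  have hsupp : α.support = univ := eq_univ_of_card _ (hcard.trans hX.symm)
  have horder : orderOf α = n := hc.orderOf.trans hcard
  let f : ZMod n → X := fun k => (α ^ k.val) x₀
  have hf : Surjective f := fun y => by
    obtain ⟨i, rfl⟩ :=
      hc.exists_pow_eq (mem_support.mp hx₀) (mem_support.mp (hsupp ▸ mem_univ y))
    exact ⟨i, by simp only [f, pow_val_eq_pow_of_natCast_eq horder rfl]⟩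
  refine ⟨.ofBijective f ((Fintype.bijective_iff_surjective_and_card f).mpr
    ⟨hf, by rw [ZMod.card, hX]⟩), fun k => ?_⟩
  have hsucc : ((k.val + 1 : ℕ) : ZMod n) = k + 1 := by push_cast [ZMod.natCast_zmod_val]; rfl
  simp only [Equiv.ofBijective_apply, f]
  rw [pow_val_eq_pow_of_natCast_eq horder hsucc, pow_succ', Equiv.Perm.mul_apply]

theorem stmt5 {n : ℕ} (L : Fin n → Fin n → Fin n) (α : Equiv.Perm (Fin n))
    (hL : IsLatinSquare L) (hA : IsAutotopism L α α α)
    (hc : α.IsCycle) (hcard : α.support.card = n) : Odd n := by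
  obtain ⟨e, he⟩ := hc.exists_equiv_zmod hcard (Fintype.card_fin n)
  have : NeZero n := ⟨by rintro rfl; exact (e 0).elim0⟩
  let M : ZMod n → ZMod n → ZMod n := fun a b => e.symm (L (e a) (e b))
  have hM : ∀ a b, M (a + 1) (b + 1) = M a b + 1 := fun a b => by
    apply e.injective
    simp only [M, he, Equiv.apply_symm_apply]
    exact hA _ _
  have hsum := sum_univ_eq_zero_of_map_add_add M
    (e.symm.bijective.comp ((hL.1 (e 0)).comp e.bijective))
    (e.symm.bijective.comp ((hL.2 (e 0)).comp e.bijective))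
    (ZMod.map_add_add_of_map_add_one hM)
  rw [← Nat.not_even_iff_odd]
  exact fun heven => ZMod.sum_univ_ne_zero_of_even heven hsum
end

section
/- If Θ = (α, β, γ) is a non-trivial autotopism of a Latin square L of order n and γ has more than ⌊n/2⌋ fixed points, then α and β have no fixed points. -/
open Classical

lemma conj_fix_card {n : ℕ} (e : Fin n ≃ Fin n) (β γ : Equiv.Perm (Fin n))
    (h : ∀ x, e (β x) = γ (e x)) :
    (Finset.univ.filter fun x => β x = x).card
      = (Finset.univ.filter fun x => γ x = x).card := by
  apply Finset.card_bij (fun x _ => e x)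
  · intro a ha
    simp only [Finset.mem_filter, Finset.mem_univ, true_and] at ha ⊢
    rw [← h, ha]
  · intro a _ b _ hab
    exact e.injective hab
  · intro b hb
    simp only [Finset.mem_filter, Finset.mem_univ, true_and] at hb ⊢
    have hm : β (e.symm b) = e.symm b := by
      apply e.injective
      rw [h, e.apply_symm_apply, hb]
    exact ⟨e.symm b, hm, e.apply_symm_apply b⟩

lemma inter_nonempty {n : ℕ} (A B : Finset (Fin n)) (hA : n / 2 < A.card)
    (hB : n / 2 < B.card) : (A ∩ B).Nonempty := by
  rw [← Finset.card_pos]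
  have h1 := Finset.card_union_add_card_inter A B
  have h2 : (A ∪ B).card ≤ n := by
    simpa using Finset.card_le_card (Finset.subset_univ (A ∪ B))
  omega

theorem stmt6 {n : ℕ} (L : Fin n → Fin n → Fin n) (α β γ : Equiv.Perm (Fin n))
    (hL : IsLatinSquare L) (hA : IsAutotopism L α β γ)
    (hnt : ¬(α = 1 ∧ β = 1 ∧ γ = 1))
    (hfix : n / 2 < (Finset.univ.filter fun x : Fin n => γ x = x).card) :
    (∀ x, α x ≠ x) ∧ ∀ x, β x ≠ x := by
  classical
  -- a fixed point of α makes β conjugate to γ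
  have key1 : (∃ i, α i = i) →
      (Finset.univ.filter fun x : Fin n => β x = x).card
        = (Finset.univ.filter fun x : Fin n => γ x = x).card := by
    rintro ⟨i₀, hi₀⟩
    refine conj_fix_card (Equiv.ofBijective (L i₀) (hL.1 i₀)) β γ fun j => ?_
    have := hA i₀ j
    rw [hi₀] at this
    simpa [Equiv.ofBijective] using this
  -- a fixed point of β makes α conjugate to γ
  have key2 : (∃ j, β j = j) →
      (Finset.univ.filter fun x : Fin n => α x = x).card
        = (Finset.univ.filter fun x : Fin n => γ x = x).card := by
    rintro ⟨j₀, hj₀⟩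
    refine conj_fix_card (Equiv.ofBijective (fun i => L i j₀) (hL.2 j₀)) α γ fun i => ?_
    have := hA i j₀
    rw [hj₀] at this
    simpa [Equiv.ofBijective] using this
  by_contra hcon
  have hex : ∃ i, α i = i := by
    rcases not_and_or.mp hcon with h | h
    · push_neg at h
      obtain ⟨i, hi⟩ := h
      exact ⟨i, hi⟩
    · push_neg at h
      obtain ⟨j, hj⟩ := h
      have hc := key2 ⟨j, hj⟩
      have : 0 < (Finset.univ.filter fun x : Fin n => α x = x).card := by omega
      obtain ⟨i, hi⟩ := Finset.card_pos.mp this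
      exact ⟨i, (Finset.mem_filter.mp hi).2⟩
  have hβcard := key1 hex
  have hβex : ∃ j, β j = j := by
    have : 0 < (Finset.univ.filter fun x : Fin n => β x = x).card := by omega
    obtain ⟨j, hj⟩ := Finset.card_pos.mp this
    exact ⟨j, (Finset.mem_filter.mp hj).2⟩
  have hαcard := key2 hβex
  -- show α = 1
  have hα1 : α = 1 := by
    apply Equiv.ext; intro i
    rw [Equiv.Perm.one_apply]
    by_contra hne
    have himg : n / 2 <
        ((Finset.univ.filter fun x : Fin n => β x = x).image (L i)).card := by
      rw [Finset.card_image_of_injective _ (hL.1 i).1]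
      omega
    obtain ⟨k, hk⟩ := inter_nonempty _ _ himg hfix
    rw [Finset.mem_inter, Finset.mem_image] at hk
    obtain ⟨⟨j, hj, hLij⟩, hkγ⟩ := hk
    have hjfix : β j = j := (Finset.mem_filter.mp hj).2
    have hkfix : γ k = k := (Finset.mem_filter.mp hkγ).2
    have : L (α i) j = L i j := by
      calc L (α i) j = L (α i) (β j) := by rw [hjfix]
        _ = γ (L i j) := hA i j
        _ = L i j := by rw [hLij, hkfix]
    have := (hL.2 j).1 this
    exact hne this
  have hβ1 : β = 1 := by
    apply Equiv.ext; intro j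
    rw [Equiv.Perm.one_apply]
    by_contra hne
    have himg : n / 2 <
        ((Finset.univ.filter fun x : Fin n => α x = x).image fun i => L i j).card := by
      rw [Finset.card_image_of_injective _ (hL.2 j).1]
      omega
    obtain ⟨k, hk⟩ := inter_nonempty _ _ himg hfix
    rw [Finset.mem_inter, Finset.mem_image] at hk
    obtain ⟨⟨i, hi, hLij⟩, hkγ⟩ := hk
    have hifix : α i = i := (Finset.mem_filter.mp hi).2
    have hkfix : γ k = k := (Finset.mem_filter.mp hkγ).2
    have : L i (β j) = L i j := by
      calc L i (β j) = L (α i) (β j) := by rw [hifix]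
        _ = γ (L i j) := hA i j
        _ = L i j := by rw [hLij, hkfix]
    have := (hL.1 i).1 this
    exact hne this
  have hγ1 : γ = 1 := by
    have hpos : 0 < (Finset.univ.filter fun x : Fin n => γ x = x).card := by omega
    obtain ⟨x, _⟩ := Finset.card_pos.mp hpos
    apply Equiv.ext; intro k
    obtain ⟨j, hj⟩ := (hL.1 x).2 k
    have := hA x j
    rw [hα1, hβ1] at this
    simp only [Equiv.Perm.coe_one, id_eq] at this ⊢
    rw [← hj, ← this]
  exact hnt ⟨hα1, hβ1, hγ1⟩
end

section
/- Let n ≥ 2 and let Θ = (α, β, γ) be a non-trivial autotopism of a Latin square of order n such that two of the three permutations α, β, γ each have at least one fixed point. Then all three permutations have the same cycle structure, each has between 1 and ⌊n/2⌋ fixed points, and the common number of cycles k satisfies 2 ≤ k ≤ ⌊n/2⌋ + ⌊⌈n/2⌉/2⌋. -/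
open Classical

/-!
If `α` fixes a row `i`, the row `j ↦ L i j` conjugates `β` into `γ`; if `β` fixes a column `j`,
the column `i ↦ L i j` conjugates `α` into `γ`. Any two of the three permutations having fixed
points forces `α` and `β` to have them, so all three are conjugate. If `β` moves a column `j`,
then `i ↦ L i j` maps the fixed points of `α` injectively to points moved by `γ`, so there are
`f ≤ n - f` fixed points. Finally the `k` cycles satisfy `f < k` (the permutations are not the
identity) and `2k ≤ n + f` (non-trivial cycles have length at least two).
-/

open Finset Function

theorem Function.Semiconj.minimalPeriod_apply {α β : Type*} {g : α → β} {fa : α → α}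
    {fb : β → β} (h : Semiconj g fa fb) (hg : Injective g) (x : α) :
    minimalPeriod fb (g x) = minimalPeriod fa x :=
  minimalPeriod_eq_minimalPeriod_iff.2 fun m => by
    rw [IsPeriodicPt, IsFixedPt, ← h.iterate_right m x, hg.eq_iff]
    rfl

section CyclesOfLen

variable {n : ℕ}

theorem IsConj.cyclesOfLen_eq {δ δ' : Equiv.Perm (Fin n)} (h : IsConj δ δ') :
    cyclesOfLen δ = cyclesOfLen δ' := by
  obtain ⟨c, rfl⟩ := isConj_iff.1 h
  have hc : Semiconj ⇑c ⇑δ ⇑(c * δ * c⁻¹) := fun x => by simp [Equiv.Perm.mul_apply]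
  funext r
  unfold cyclesOfLen
  congr 1
  exact card_equiv c fun x => by
    simp only [mem_filter, mem_univ, true_and, hc.minimalPeriod_apply c.injective]

theorem cyclesOfLen_one (δ : Equiv.Perm (Fin n)) :
    cyclesOfLen δ 1 = #{x | δ x = x} := by
  simp [cyclesOfLen, minimalPeriod_eq_one_iff_isFixedPt, IsFixedPt]

theorem card_filter_apply_ne_self (δ : Equiv.Perm (Fin n)) :
    #{x | δ x ≠ x} = n - cyclesOfLen δ 1 := by
  rw [cyclesOfLen_one, filter_not, card_sdiff_of_subset (filter_subset _ _), card_univ,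
    Fintype.card_fin]

theorem minimalPeriod_le_card_filter_minimalPeriod_eq (δ : Equiv.Perm (Fin n)) (x : Fin n) :
    minimalPeriod δ x ≤ #{y | minimalPeriod δ y = minimalPeriod δ x} := by
  have horbit : Set.MapsTo (fun m => δ^[m] x) (range (minimalPeriod δ x) : Set ℕ)
      (({y | minimalPeriod δ y = minimalPeriod δ x} : Finset (Fin n)) : Set (Fin n)) :=
    fun m _ => by simp [minimalPeriod_apply_iterate (δ.injective.mem_periodicPts x)]
  have hinj : Set.InjOn (fun m => δ^[m] x) (range (minimalPeriod δ x) : Set ℕ) := by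
    simpa using iterate_injOn_Iio_minimalPeriod
  simpa using card_le_card_of_injOn _ horbit hinj

theorem minimalPeriod_mem_Icc (δ : Equiv.Perm (Fin n)) (x : Fin n) :
    minimalPeriod δ x ∈ Icc 1 n :=
  mem_Icc.2 ⟨minimalPeriod_pos_of_mem_periodicPts (δ.injective.mem_periodicPts x),
    minimalPeriod_le_card.trans_eq (Fintype.card_fin n)⟩

theorem one_le_cyclesOfLen_minimalPeriod (δ : Equiv.Perm (Fin n)) (x : Fin n) :
    1 ≤ cyclesOfLen δ (minimalPeriod δ x) :=
  (Nat.one_le_div_iff (mem_Icc.1 (minimalPeriod_mem_Icc δ x)).1).2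
    (minimalPeriod_le_card_filter_minimalPeriod_eq δ x)

theorem sum_card_filter_minimalPeriod_eq (δ : Equiv.Perm (Fin n)) :
    ∑ r ∈ Icc 1 n, #{x | minimalPeriod δ x = r} = n := by
  have hmaps : Set.MapsTo (minimalPeriod δ) (univ : Finset (Fin n)) (Icc 1 n) :=
    fun x _ => minimalPeriod_mem_Icc δ x
  simpa using (card_eq_sum_card_fiberwise hmaps).symm

theorem cyclesOfLen_one_lt_sum_cyclesOfLen {δ : Equiv.Perm (Fin n)} (hδ : δ ≠ 1) :
    cyclesOfLen δ 1 < ∑ r ∈ Icc 1 n, cyclesOfLen δ r := by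
  obtain ⟨x, hx⟩ : ∃ x, δ x ≠ x := not_forall.1 fun h => hδ (Equiv.ext h)
  have hr1 : minimalPeriod δ x ≠ 1 := fun h => hx (minimalPeriod_eq_one_iff_isFixedPt.1 h)
  have hsub : {1, minimalPeriod δ x} ⊆ Icc 1 n := by
    intro r hr
    rcases mem_insert.1 hr with rfl | hr
    · exact mem_Icc.2 ⟨le_rfl, x.pos⟩
    · exact mem_singleton.1 hr ▸ minimalPeriod_mem_Icc δ x
  calc cyclesOfLen δ 1 < cyclesOfLen δ 1 + cyclesOfLen δ (minimalPeriod δ x) :=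
        Nat.lt_add_of_pos_right (one_le_cyclesOfLen_minimalPeriod δ x)
    _ = ∑ r ∈ {1, minimalPeriod δ x}, cyclesOfLen δ r := (sum_pair (Ne.symm hr1)).symm
    _ ≤ ∑ r ∈ Icc 1 n, cyclesOfLen δ r := sum_le_sum_of_subset hsub

theorem two_mul_sum_cyclesOfLen_le (δ : Equiv.Perm (Fin n)) :
    2 * ∑ r ∈ Icc 1 n, cyclesOfLen δ r ≤ n + cyclesOfLen δ 1 := by
  set c : ℕ → ℕ := fun r => #{x | minimalPeriod δ x = r}
  have hterm : ∀ r ∈ Icc 1 n, 2 * (c r / r) ≤ c r + if r = 1 then c r else 0 := by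
    intro r hr
    split_ifs with h1
    · simp [h1]; omega
    · have hr2 : 2 ≤ r := by have := (mem_Icc.1 hr).1; omega
      calc 2 * (c r / r) ≤ r * (c r / r) := Nat.mul_le_mul_right _ hr2
        _ ≤ c r + 0 := Nat.mul_div_le _ _
  calc 2 * ∑ r ∈ Icc 1 n, cyclesOfLen δ r = ∑ r ∈ Icc 1 n, 2 * (c r / r) := mul_sum _ _ _
    _ ≤ ∑ r ∈ Icc 1 n, (c r + if r = 1 then c r else 0) := sum_le_sum hterm
    _ ≤ n + c 1 := by
        rw [sum_add_distrib, sum_card_filter_minimalPeriod_eq, sum_ite_eq']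
        split_ifs <;> simp
    _ = n + cyclesOfLen δ 1 := by simp [cyclesOfLen, c]

end CyclesOfLen

section LatinSquare

variable {n : ℕ} {L : Fin n → Fin n → Fin n} {α β γ : Equiv.Perm (Fin n)}

theorem IsLatinSquare.transpose (hL : IsLatinSquare L) : IsLatinSquare fun i j => L j i :=
  hL.symm

theorem IsAutotopism.transpose (hA : IsAutotopism L α β γ) :
    IsAutotopism (fun i j => L j i) β α γ :=
  fun i j => hA j i

theorem IsAutotopism.isConj_of_apply_eq_self (hL : IsLatinSquare L) (hA : IsAutotopism L α β γ)
    {i : Fin n} (hi : α i = i) : IsConj β γ := by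
  refine isConj_iff.2 ⟨Equiv.ofBijective (L i) (hL.1 i), ?_⟩
  rw [mul_inv_eq_iff_eq_mul]
  refine Equiv.ext fun j => ?_
  simpa [hi] using hA i j

theorem IsAutotopism.exists_apply_eq_self (hL : IsLatinSquare L) (hA : IsAutotopism L α β γ)
    {i k : Fin n} (hi : α i = i) (hk : γ k = k) : ∃ j, β j = j := by
  obtain ⟨j, hj⟩ := (hL.1 i).2 k
  refine ⟨j, (hL.1 i).1 ?_⟩
  simpa [hi, hj, hk] using hA i j

theorem IsAutotopism.card_fixed_le_card_not_fixed (hL : IsLatinSquare L)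
    (hA : IsAutotopism L α β γ) {j : Fin n} (hj : β j ≠ j) :
    #{i | α i = i} ≤ #{k | γ k ≠ k} := by
  refine card_le_card_of_injOn (L · j) (fun i hi => ?_) (hL.2 j).1.injOn
  simp only [coe_filter, Set.mem_ofPred_eq, mem_univ, true_and] at hi ⊢
  intro hk
  have h := hA i j
  rw [hi, hk] at h
  exact hj ((hL.1 i).1 h)

end LatinSquare

theorem stmt7_general {n : ℕ} (L : Fin n → Fin n → Fin n)
    (α β γ : Equiv.Perm (Fin n))
    (hL : IsLatinSquare L) (hA : IsAutotopism L α β γ)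
    (hnt : ¬(α = 1 ∧ β = 1 ∧ γ = 1))
    (hfix : ((∃ x, α x = x) ∧ ∃ x, β x = x) ∨ ((∃ x, α x = x) ∧ ∃ x, γ x = x) ∨
      ((∃ x, β x = x) ∧ ∃ x, γ x = x)) :
    α.cycleType = β.cycleType ∧ β.cycleType = γ.cycleType ∧
    (∀ δ ∈ [α, β, γ], 1 ≤ cyclesOfLen δ 1 ∧ cyclesOfLen δ 1 ≤ n / 2) ∧
    ∃ k, (∀ δ ∈ [α, β, γ], ∑ r ∈ Finset.Icc 1 n, cyclesOfLen δ r = k) ∧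
      2 ≤ k ∧ k ≤ n / 2 + (n + 1) / 2 / 2 := by
  obtain ⟨⟨i, hi⟩, ⟨j, hj⟩⟩ : (∃ i, α i = i) ∧ ∃ j, β j = j := by
    rcases hfix with h | ⟨⟨i, hi⟩, ⟨k, hk⟩⟩ | ⟨⟨j, hj⟩, ⟨k, hk⟩⟩
    · exact h
    · exact ⟨⟨i, hi⟩, hA.exists_apply_eq_self hL hi hk⟩
    · exact ⟨hA.transpose.exists_apply_eq_self hL.transpose hj hk, ⟨j, hj⟩⟩
  have hαγ : IsConj α γ := hA.transpose.isConj_of_apply_eq_self hL.transpose hj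
  have hβγ : IsConj β γ := hA.isConj_of_apply_eq_self hL hi
  have hconj : ∀ δ ∈ [α, β, γ], cyclesOfLen δ = cyclesOfLen γ := by
    simp [hαγ.cyclesOfLen_eq, hβγ.cyclesOfLen_eq]
  have hγ : γ ≠ 1 := fun h => hnt ⟨by simpa [h] using hαγ, by simpa [h] using hβγ, h⟩
  have hβ : β ≠ 1 := fun h => hγ (isConj_one_right.1 (h ▸ hβγ))
  obtain ⟨j', hj'⟩ : ∃ j', β j' ≠ j' := not_forall.1 fun h => hβ (Equiv.ext h)
  have hpos : 0 < cyclesOfLen γ 1 := by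
    rw [← hβγ.cyclesOfLen_eq, cyclesOfLen_one]
    exact card_pos.2 ⟨j, by simp [hj]⟩
  have hhalf : cyclesOfLen γ 1 ≤ n - cyclesOfLen γ 1 :=
    calc cyclesOfLen γ 1 = #{i | α i = i} := by rw [← hαγ.cyclesOfLen_eq, cyclesOfLen_one]
      _ ≤ #{k | γ k ≠ k} := hA.card_fixed_le_card_not_fixed hL hj'
      _ = n - cyclesOfLen γ 1 := card_filter_apply_ne_self γ
  have hlt := cyclesOfLen_one_lt_sum_cyclesOfLen hγ
  have hle := two_mul_sum_cyclesOfLen_le γ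
  refine ⟨Equiv.Perm.isConj_iff_cycleType_eq.1 (hαγ.trans hβγ.symm),
    Equiv.Perm.isConj_iff_cycleType_eq.1 hβγ, fun δ hδ => ?_,
    ∑ r ∈ Icc 1 n, cyclesOfLen γ r, fun δ hδ => by rw [hconj δ hδ], by omega, by omega⟩
  rw [hconj δ hδ]
  omega

theorem stmt7 {n : ℕ} (hn : 2 ≤ n) (L : Fin n → Fin n → Fin n)
    (α β γ : Equiv.Perm (Fin n))
    (hL : IsLatinSquare L) (hA : IsAutotopism L α β γ)
    (hnt : ¬(α = 1 ∧ β = 1 ∧ γ = 1))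
    (hfix : ((∃ x, α x = x) ∧ ∃ x, β x = x) ∨ ((∃ x, α x = x) ∧ ∃ x, γ x = x) ∨
      ((∃ x, β x = x) ∧ ∃ x, γ x = x)) :
    α.cycleType = β.cycleType ∧ β.cycleType = γ.cycleType ∧
    (∀ δ ∈ [α, β, γ], 1 ≤ cyclesOfLen δ 1 ∧ cyclesOfLen δ 1 ≤ n / 2) ∧
    ∃ k, (∀ δ ∈ [α, β, γ], ∑ r ∈ Finset.Icc 1 n, cyclesOfLen δ r = k) ∧
      2 ≤ k ∧ k ≤ n / 2 + (n + 1) / 2 / 2 :=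
  stmt7_general L α β γ hL hA hnt hfix
end

section
/- Let Θ = (α, β, γ) be an autotopism of a Latin square L of order n. If γ has a cycle of length t, then there exist cycle lengths r of α and s of β such that t divides lcm(r, s). -/
open Classical

lemma iter_auto {n : ℕ} (L : Fin n → Fin n → Fin n) (α β γ : Equiv.Perm (Fin n))
    (hA : IsAutotopism L α β γ) (i j : Fin n) :
    ∀ m : ℕ, L ((⇑α)^[m] i) ((⇑β)^[m] j) = (⇑γ)^[m] (L i j) := by
  intro m
  induction m with
  | zero => simp
  | succ m ih =>
    rw [Function.iterate_succ_apply', Function.iterate_succ_apply',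
      Function.iterate_succ_apply', hA, ih]

theorem stmt8 {n : ℕ} (L : Fin n → Fin n → Fin n) (α β γ : Equiv.Perm (Fin n))
    (hL : IsLatinSquare L) (hA : IsAutotopism L α β γ) (t : ℕ)
    (ht : ∃ x, Function.minimalPeriod (⇑γ) x = t) :
    ∃ r s : ℕ, (∃ x, Function.minimalPeriod (⇑α) x = r) ∧
      (∃ y, Function.minimalPeriod (⇑β) y = s) ∧ t ∣ Nat.lcm r s := by
  obtain ⟨x, hx⟩ := ht
  obtain ⟨i, j, hij⟩ : ∃ i j, L i j = x := by
    have : 0 < n := Fin.pos x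
    let i : Fin n := ⟨0, this⟩
    obtain ⟨j, hj⟩ := (hL.1 i).2 x
    exact ⟨i, j, hj⟩
  refine ⟨Function.minimalPeriod (⇑α) i, Function.minimalPeriod (⇑β) j,
    ⟨i, rfl⟩, ⟨j, rfl⟩, ?_⟩
  set r := Function.minimalPeriod (⇑α) i
  set s := Function.minimalPeriod (⇑β) j
  have hper : Function.IsPeriodicPt (⇑γ) (Nat.lcm r s) x := by
    show (⇑γ)^[Nat.lcm r s] x = x
    rw [← hij, ← iter_auto L α β γ hA i j]
    obtain ⟨a, ha⟩ := Nat.dvd_lcm_left r s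
    obtain ⟨b, hb⟩ := Nat.dvd_lcm_right r s
    have hα : (⇑α)^[Nat.lcm r s] i = i := by
      rw [ha]; exact (Function.isPeriodicPt_minimalPeriod (⇑α) i).mul_const a
    have hβ : (⇑β)^[Nat.lcm r s] j = j := by
      rw [hb]; exact (Function.isPeriodicPt_minimalPeriod (⇑β) j).mul_const b
    rw [hα, hβ, hij]
  rw [← hx]
  exact Function.IsPeriodicPt.minimalPeriod_dvd hper
end

section
/- Let Θ = (α, β, γ) be an autotopism of a Latin square L of order n. If α has a cycle of length r and β has a cycle of length s with gcd(r,s) = 1, then r·s ≤ n and γ has a cycle of length r·s. -/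
open Classical

theorem stmt9 {n : ℕ} (L : Fin n → Fin n → Fin n) (α β γ : Equiv.Perm (Fin n))
    (hL : IsLatinSquare L) (hA : IsAutotopism L α β γ) (r s : ℕ)
    (hr : ∃ x, Function.minimalPeriod (⇑α) x = r)
    (hs : ∃ y, Function.minimalPeriod (⇑β) y = s)
    (hrs : Nat.gcd r s = 1) :
    r * s ≤ n ∧ ∃ z, Function.minimalPeriod (⇑γ) z = r * s := by
  obtain ⟨x, hx⟩ := hr
  obtain ⟨y, hy⟩ := hs
  set z := L x y with hz
  -- iterates of γ on z
  have hiter : ∀ m, (⇑γ)^[m] z = L ((⇑α)^[m] x) ((⇑β)^[m] y) := by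
    intro m
    induction m with
    | zero => rfl
    | succ m ih =>
        rw [Function.iterate_succ_apply', Function.iterate_succ_apply',
          Function.iterate_succ_apply', ih, ← hA]
  have hxr : (⇑α)^[r] x = x := by rw [← hx]; exact Function.iterate_minimalPeriod
  have hys : (⇑β)^[s] y = y := by rw [← hy]; exact Function.iterate_minimalPeriod
  set t := Function.minimalPeriod (⇑γ) z with ht
  have hzt : Function.IsPeriodicPt (⇑γ) t z := Function.isPeriodicPt_minimalPeriod _ _
  -- t divides r * s
  have htdvd : t ∣ r * s := by
    apply Function.IsPeriodicPt.minimalPeriod_dvd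
    show (⇑γ)^[r * s] z = z
    rw [hiter]
    have h1 : (⇑α)^[r * s] x = x := by
      rw [Function.iterate_mul]; exact Function.iterate_fixed hxr s
    have h2 : (⇑β)^[r * s] y = y := by
      rw [mul_comm, Function.iterate_mul]; exact Function.iterate_fixed hys r
    rw [h1, h2]
  -- r divides t
  have hrt : r ∣ t := by
    have hγ : (⇑γ)^[s * t] z = z := hzt.trans_dvd ⟨s, mul_comm s t⟩
    have hβ : (⇑β)^[s * t] y = y := by
      rw [Function.iterate_mul]; exact Function.iterate_fixed hys t
    have hαfix : (⇑α)^[s * t] x = x := by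
      have := hγ
      rw [hiter, hβ] at this
      exact (hL.2 y).1 this
    have : r ∣ s * t := by
      rw [← hx]; exact Function.IsPeriodicPt.minimalPeriod_dvd hαfix
    exact (Nat.Coprime.dvd_of_dvd_mul_left hrs this)
  -- s divides t
  have hst : s ∣ t := by
    have hγ : (⇑γ)^[r * t] z = z := hzt.trans_dvd ⟨r, mul_comm r t⟩
    have hα : (⇑α)^[r * t] x = x := by
      rw [Function.iterate_mul]; exact Function.iterate_fixed hxr t
    have hβfix : (⇑β)^[r * t] y = y := by
      have := hγ
      rw [hiter, hα] at this
      exact (hL.1 x).1 this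
    have : s ∣ r * t := by
      rw [← hy]; exact Function.IsPeriodicPt.minimalPeriod_dvd hβfix
    exact (Nat.Coprime.dvd_of_dvd_mul_left (Nat.coprime_comm.mp hrs) this)
  have hteq : t = r * s :=
    Nat.dvd_antisymm htdvd (Nat.Coprime.mul_dvd_of_dvd_of_dvd hrs hrt hst)
  -- t ≤ n
  have htle : t ≤ n := by
    have hinj : Set.InjOn (fun i => (⇑γ)^[i] z) (Set.Iio t) :=
      Function.iterate_injOn_Iio_minimalPeriod
    have := Finset.card_le_card_of_injOn (fun i => (⇑γ)^[i] z)
      (fun a _ => Finset.mem_univ _)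
      (fun a ha b hb hab => hinj (Finset.mem_range.mp ha) (Finset.mem_range.mp hb) hab)
      (s := Finset.range t) (t := (Finset.univ : Finset (Fin n)))
    simpa using this
  exact ⟨hteq ▸ htle, z, ht ▸ hteq⟩
end

section
/- Let Θ = (α, β, γ) be an autotopism of a Latin square L of order n and let p be a prime such that both α and β have at least one cycle of length p. If γ has no fixed points, then the number of p-cycles of γ is at least the maximum of the number of p-cycles of α and the number of p-cycles of β. -/
open Classical

/-!
If `j₀` lies in a `p`-cycle of `β`, the column `i ↦ L i j₀` is injective and, by the autotopism
property, maps every point of a `p`-cycle of `α` to a point `k` with `γ^[p] k = k`. As `p` is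
prime and `γ` has no fixed points, `k` lies in a `p`-cycle of `γ`. Hence `γ` has at least as many
points in `p`-cycles as `α`, and the same argument on the transposed square compares `β` with `γ`.
-/

open Function

theorem Function.minimalPeriod_eq_prime_of_isPeriodicPt {X : Type*} {f : X → X} {p : ℕ}
    (hp : p.Prime) (hf : ∀ x, f x ≠ x) {x : X} (hx : IsPeriodicPt f p x) :
    minimalPeriod f x = p :=
  (hp.eq_one_or_self_of_dvd _ hx.minimalPeriod_dvd).resolve_left
    fun h => hf x (minimalPeriod_eq_one_iff_isFixedPt.mp h)

namespace IsAutotopism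

variable {n : ℕ} {L : Fin n → Fin n → Fin n} {α β γ : Equiv.Perm (Fin n)}

theorem transpose_s11 (hA : IsAutotopism L α β γ) : IsAutotopism (fun j i => L i j) β α γ :=
  fun j i => hA i j

theorem iterate_apply (hA : IsAutotopism L α β γ) (m : ℕ) (i j : Fin n) :
    L ((⇑α)^[m] i) ((⇑β)^[m] j) = (⇑γ)^[m] (L i j) := by
  induction m with
  | zero => rfl
  | succ m ih => rw [iterate_succ_apply', iterate_succ_apply', iterate_succ_apply', hA, ih]

theorem isPeriodicPt_apply (hA : IsAutotopism L α β γ) {p : ℕ} {i j : Fin n}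
    (hi : IsPeriodicPt α p i) (hj : IsPeriodicPt β p j) : IsPeriodicPt γ p (L i j) := by
  rw [IsPeriodicPt, IsFixedPt, ← hA.iterate_apply, hi.eq, hj.eq]

theorem cyclesOfLen_le {p : ℕ} (hp : p.Prime) (hcol : ∀ j, Injective fun i => L i j)
    (hA : IsAutotopism L α β γ) (hγ : ∀ x, γ x ≠ x) {j₀ : Fin n} (hj₀ : IsPeriodicPt β p j₀) :
    cyclesOfLen α p ≤ cyclesOfLen γ p := by
  refine Nat.div_le_div_right (Finset.card_le_card_of_injOn (fun i => L i j₀) ?_ ?_)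
  · intro i hi
    simp only [Finset.coe_filter, Finset.mem_univ, true_and, Set.mem_ofPred_eq] at hi ⊢
    have hi' : IsPeriodicPt α p i := hi ▸ isPeriodicPt_minimalPeriod _ _
    exact minimalPeriod_eq_prime_of_isPeriodicPt hp hγ (hA.isPeriodicPt_apply hi' hj₀)
  · exact (hcol j₀).injOn

end IsAutotopism

theorem exists_minimalPeriod_eq_of_cyclesOfLen_pos {n p : ℕ} {δ : Equiv.Perm (Fin n)}
    (h : 0 < cyclesOfLen δ p) : ∃ x, minimalPeriod δ x = p := by
  by_contra! hc
  simp [cyclesOfLen, Finset.filter_eq_empty_iff.mpr fun x _ => hc x] at h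

theorem stmt11 {n : ℕ} (L : Fin n → Fin n → Fin n) (α β γ : Equiv.Perm (Fin n))
    (hL : IsLatinSquare L) (hA : IsAutotopism L α β γ) (p : ℕ) (hp : p.Prime)
    (hα : 0 < cyclesOfLen α p) (hβ : 0 < cyclesOfLen β p)
    (hγ : ∀ x, γ x ≠ x) :
    max (cyclesOfLen α p) (cyclesOfLen β p) ≤ cyclesOfLen γ p := by
  obtain ⟨i₀, hi₀⟩ := exists_minimalPeriod_eq_of_cyclesOfLen_pos hα
  obtain ⟨j₀, hj₀⟩ := exists_minimalPeriod_eq_of_cyclesOfLen_pos hβ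
  exact max_le
    (hA.cyclesOfLen_le hp (fun j => (hL.2 j).injective) hγ
      (hj₀ ▸ isPeriodicPt_minimalPeriod _ _))
    (hA.transpose_s11.cyclesOfLen_le hp (fun i => (hL.1 i).injective) hγ
      (hi₀ ▸ isPeriodicPt_minimalPeriod _ _))
end

section
/- There is no Latin square L of order n admitting an autotopism Θ = (α, β, γ) in which both α and β have a cycle of length 2, γ has no fixed points, and γ has exactly one cycle of length 2. -/
open Classical

lemma period_two_of {n : ℕ} (δ : Equiv.Perm (Fin n)) (z : Fin n)
    (h : δ (δ z) = z) (hne : δ z ≠ z) : Function.minimalPeriod (⇑δ) z = 2 := by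
  have hp : Function.IsPeriodicPt (⇑δ) 2 z := by
    simp [Function.IsPeriodicPt, Function.IsFixedPt, Function.iterate_succ', h]
  have hdvd := hp.minimalPeriod_dvd
  have hpos := hp.minimalPeriod_pos (by norm_num)
  have h1 : Function.minimalPeriod (⇑δ) z ≠ 1 := by
    intro h
    exact hne (Function.minimalPeriod_eq_one_iff_isFixedPt.mp h)
  rcases (Nat.prime_two).eq_one_or_self_of_dvd _ hdvd with h | h
  · exact absurd h h1
  · exact h

theorem stmt12 {n : ℕ} (L : Fin n → Fin n → Fin n) (α β γ : Equiv.Perm (Fin n))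
    (hL : IsLatinSquare L) (hA : IsAutotopism L α β γ)
    (hα : ∃ x, Function.minimalPeriod (⇑α) x = 2)
    (hβ : ∃ y, Function.minimalPeriod (⇑β) y = 2)
    (hfix : ∀ z, γ z ≠ z) (h2 : cyclesOfLen γ 2 = 1) : False := by
  obtain ⟨x, hx⟩ := hα
  obtain ⟨y, hy⟩ := hβ
  have hαx : α (α x) = x := by
    have := Function.isPeriodicPt_minimalPeriod (⇑α) x
    rw [hx] at this
    simpa [Function.IsPeriodicPt, Function.IsFixedPt, Function.iterate_succ'] using this
  have hβy : β (β y) = y := by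
    have := Function.isPeriodicPt_minimalPeriod (⇑β) y
    rw [hy] at this
    simpa [Function.IsPeriodicPt, Function.IsFixedPt, Function.iterate_succ'] using this
  have hαne : α x ≠ x := by
    intro h
    have := Function.minimalPeriod_eq_one_iff_isFixedPt.mpr h
    rw [hx] at this; omega
  have hβne : β y ≠ y := by
    intro h
    have := Function.minimalPeriod_eq_one_iff_isFixedPt.mpr h
    rw [hy] at this; omega
  set k := L x y with hk
  set k' := L x (β y) with hk'
  have e1 : L (α x) (β y) = γ k := hA x y
  have e2 : L x y = γ (γ k) := by
    have := hA (α x) (β y)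
    rw [hαx, hβy, e1] at this; exact this
  have e3 : L (α x) y = γ k' := by
    have := hA x (β y)
    rwa [hβy] at this
  have e4 : L x (β y) = γ (γ k') := by
    have := hA (α x) y
    rw [hαx, e3] at this; exact this
  have hγγk : γ (γ k) = k := e2.symm
  have hγγk' : γ (γ k') = k' := e4.symm
  have hkmem : Function.minimalPeriod (⇑γ) k = 2 := period_two_of γ k hγγk (hfix k)
  have hk'mem : Function.minimalPeriod (⇑γ) k' = 2 := period_two_of γ k' hγγk' (hfix k')
  have hγkmem : Function.minimalPeriod (⇑γ) (γ k) = 2 :=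
    period_two_of γ (γ k) (by rw [hγγk]) (by intro h; exact hfix k (γ.injective (by rw [hγγk] at h; exact h ▸ hγγk)))
  have hγk'mem : Function.minimalPeriod (⇑γ) (γ k') = 2 :=
    period_two_of γ (γ k') (by rw [hγγk']) (by intro h; exact hfix k' (γ.injective (by rw [hγγk'] at h; exact h ▸ hγγk')))
  -- row x injective: k ≠ k'
  have hkk' : k ≠ k' := by
    intro h
    exact hβne ((hL.1 x).1 h.symm)
  -- claim k' = γ k
  by_cases hc : k' = γ k
  · -- then L (α x) y = γ k' = γ (γ k) = k = L x y
    have : L (α x) y = L x y := by rw [e3, hc, hγγk, hk]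
    exact hαne ((hL.2 y).1 this)
  · -- four distinct elements of the period-2 set
    have d1 : k ≠ γ k := fun h => hfix k h.symm
    have d2 : k' ≠ γ k' := fun h => hfix k' h.symm
    have d3 : γ k' ≠ k := by
      intro h
      apply hc
      have := congrArg γ h
      rw [hγγk'] at this
      exact this.symm ▸ rfl
    have d4 : γ k ≠ γ k' := fun h => hkk' (γ.injective h)
    set S := Finset.univ.filter fun z : Fin n => Function.minimalPeriod (⇑γ) z = 2 with hS
    have hsub : ({k, γ k, k', γ k'} : Finset (Fin n)) ⊆ S := by
      intro z hz
      simp only [Finset.mem_insert, Finset.mem_singleton] at hz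
      simp only [hS, Finset.mem_filter, Finset.mem_univ, true_and]
      rcases hz with h | h | h | h <;> subst h <;> assumption
    have n1 : k ∉ ({γ k, k', γ k'} : Finset (Fin n)) := by
      simp only [Finset.mem_insert, Finset.mem_singleton]
      push_neg
      exact ⟨d1, hkk', fun h => d3 h.symm⟩
    have n2 : γ k ∉ ({k', γ k'} : Finset (Fin n)) := by
      simp only [Finset.mem_insert, Finset.mem_singleton]
      push_neg
      exact ⟨fun h => hc h.symm, d4⟩
    have n3 : k' ∉ ({γ k'} : Finset (Fin n)) := by
      simp only [Finset.mem_singleton]; exact d2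
    have hcard : ({k, γ k, k', γ k'} : Finset (Fin n)).card = 4 := by
      rw [Finset.card_insert_of_notMem n1, Finset.card_insert_of_notMem n2,
        Finset.card_insert_of_notMem n3, Finset.card_singleton]
    have h4 : 4 ≤ S.card := hcard ▸ Finset.card_le_card hsub
    have h2' : S.card / 2 = 1 := h2
    omega
end

section
/- Let Θ = (α, β, γ) be an autotopism of a Latin square L of order n, let t be a cycle length of γ with l_t^γ cycles of γ having length t, and let r be a cycle length of α. Suppose u is a cycle length of β such that for every i in a cycle of α of length r and every j in a cycle of β of length u, the symbol l_{i,j} lies in a cycle of γ of length t. Then u · l_u^β ≤ t · l_t^γ, where l_u^β is the number of cycles of β of length u. -/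
open Classical

open Finset

/-!
Fix a row `i₀` whose `α`-cycle has length `r`. Since `L` is a Latin square, `j ↦ L i₀ j` is
injective, and it sends every point of `β`-period `u` to a point of `γ`-period `t`. The points of
period `m` of a permutation are the union of its cycles of length `m`, so there are
`m * cyclesOfLen δ m` of them, and the inequality is a comparison of cardinalities.
-/

namespace Equiv.Perm

variable {α : Type*} (δ : Perm α)

theorem SameCycle.minimalPeriod_eq [Finite α] {x y : α} (h : δ.SameCycle x y) :
    Function.minimalPeriod δ y = Function.minimalPeriod δ x := by
  obtain ⟨i, -, rfl⟩ := h.exists_pow_eq'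
  rw [← iterate_eq_pow]
  exact Function.minimalPeriod_apply_iterate (δ.injective.mem_periodicPts x) i

theorem card_filter_sameCycle [Fintype α] [DecidableEq α] (x : α) :
    #{y | δ.SameCycle x y} = Function.minimalPeriod δ x := by
  have hpos := Function.minimalPeriod_pos_of_mem_periodicPts (δ.injective.mem_periodicPts x)
  have hcycle : ({y | δ.SameCycle x y} : Finset α) =
      (range (Function.minimalPeriod δ x)).image (fun k => δ^[k] x) := by
    ext y
    simp only [mem_filter, mem_univ, true_and, mem_image, mem_range]
    constructor
    · intro h
      obtain ⟨i, -, rfl⟩ := h.exists_pow_eq'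
      refine ⟨i % _, Nat.mod_lt _ hpos, ?_⟩
      rw [Function.iterate_mod_minimalPeriod_eq, iterate_eq_pow]
    · rintro ⟨k, -, rfl⟩
      exact ⟨k, by rw [zpow_natCast, iterate_eq_pow]⟩
  rw [hcycle, card_image_of_injOn, card_range]
  intro a ha b hb hab
  exact Function.iterate_injOn_Iio_minimalPeriod (by simpa using ha) (by simpa using hb) hab

theorem dvd_card_filter_minimalPeriod_eq [Fintype α] (m : ℕ) :
    m ∣ #{x | Function.minimalPeriod δ x = m} := by
  set S : Finset α := {x | Function.minimalPeriod δ x = m}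
  rw [card_eq_sum_card_fiberwise fun x hx =>
    mem_image_of_mem (fun x => ({y | δ.SameCycle x y} : Finset α)) hx]
  refine dvd_sum fun c hc => ?_
  obtain ⟨x, hxS, rfl⟩ := mem_image.mp hc
  have hxm : Function.minimalPeriod δ x = m := (mem_filter.mp hxS).2
  have hfiber :
      {y ∈ S | ({z | δ.SameCycle y z} : Finset α) = ({z | δ.SameCycle x z} : Finset α)} =
        ({y | δ.SameCycle x y} : Finset α) := by
    ext y
    simp only [S, mem_filter, mem_univ, true_and]
    constructor
    · rintro ⟨-, hyx⟩
      have hy : y ∈ ({z | δ.SameCycle y z} : Finset α) := by simp [SameCycle.rfl]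
      rw [hyx] at hy
      simpa using hy
    · intro hxy
      refine ⟨(hxy.minimalPeriod_eq δ).trans hxm, ?_⟩
      ext z
      simp only [mem_filter, mem_univ, true_and]
      exact ⟨hxy.trans, hxy.symm.trans⟩
  rw [hfiber, card_filter_sameCycle, hxm]

end Equiv.Perm

theorem mul_cyclesOfLen {n : ℕ} (δ : Equiv.Perm (Fin n)) (m : ℕ) :
    m * cyclesOfLen δ m = #{x | Function.minimalPeriod δ x = m} :=
  Nat.mul_div_cancel' (δ.dvd_card_filter_minimalPeriod_eq m)

theorem stmt15_general {n : ℕ} (L : Fin n → Fin n → Fin n) (α β γ : Equiv.Perm (Fin n))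
    (hL : IsLatinSquare L) (r u t : ℕ)
    (hr : ∃ x, Function.minimalPeriod (⇑α) x = r)
    (hall : ∀ i j, Function.minimalPeriod (⇑α) i = r → Function.minimalPeriod (⇑β) j = u →
      Function.minimalPeriod (⇑γ) (L i j) = t) :
    u * cyclesOfLen β u ≤ t * cyclesOfLen γ t := by
  obtain ⟨i₀, hi₀⟩ := hr
  rw [mul_cyclesOfLen, mul_cyclesOfLen]
  refine card_le_card_of_injOn (L i₀) (fun j hj => ?_) (hL.1 i₀).injective.injOn
  simp only [coe_filter, mem_univ, true_and, Set.mem_ofPred_eq] at hj ⊢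
  exact hall i₀ j hi₀ hj

theorem stmt15 {n : ℕ} (L : Fin n → Fin n → Fin n) (α β γ : Equiv.Perm (Fin n))
    (hL : IsLatinSquare L) (hA : IsAutotopism L α β γ) (r u t : ℕ)
    (ht : ∃ x, Function.minimalPeriod (⇑γ) x = t)
    (hr : ∃ x, Function.minimalPeriod (⇑α) x = r)
    (hu : ∃ y, Function.minimalPeriod (⇑β) y = u)
    (hall : ∀ i j, Function.minimalPeriod (⇑α) i = r → Function.minimalPeriod (⇑β) j = u →
      Function.minimalPeriod (⇑γ) (L i j) = t) :
    u * cyclesOfLen β u ≤ t * cyclesOfLen γ t :=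
  stmt15_general L α β γ hL r u t hr hall
end

section
/- Let Θ = (α, β, γ) be an autotopism of a Latin square L of order n, let i lie in a cycle of α of length r, let j lie in a cycle of β of length s with r ≠ s, and let l_{i,j} lie in a cycle of γ of length t. Then t does not divide any positive multiple of s that is strictly smaller than lcm(r, s). -/
open Classical

theorem stmt19 {n : ℕ} (L : Fin n → Fin n → Fin n) (α β γ : Equiv.Perm (Fin n))
    (hL : IsLatinSquare L) (hA : IsAutotopism L α β γ) (i j : Fin n) (r s t : ℕ)
    (hr : Function.minimalPeriod (⇑α) i = r) (hs : Function.minimalPeriod (⇑β) j = s)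
    (ht : Function.minimalPeriod (⇑γ) (L i j) = t) (hrs : r ≠ s) :
    ∀ m : ℕ, 0 < m → s ∣ m → m < Nat.lcm r s → ¬ t ∣ m := by
  have key : ∀ m : ℕ, L ((⇑α)^[m] i) ((⇑β)^[m] j) = (⇑γ)^[m] (L i j) := by
    intro m
    induction m with
    | zero => simp
    | succ k ih =>
      simp only [Function.iterate_succ', Function.comp_apply]
      rw [hA, ih]
  intro m hm hsm hmlt htm
  have hβ : (⇑β)^[m] j = j := by
    obtain ⟨k, rfl⟩ := hsm
    have := (Function.isPeriodicPt_minimalPeriod (⇑β) j).mul_const k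
    rwa [hs] at this
  have hγ : (⇑γ)^[m] (L i j) = L i j := by
    obtain ⟨k, rfl⟩ := htm
    have := (Function.isPeriodicPt_minimalPeriod (⇑γ) (L i j)).mul_const k
    rwa [ht] at this
  have heq : L ((⇑α)^[m] i) j = L i j := by
    have := key m
    rwa [hβ, hγ] at this
  have hα : (⇑α)^[m] i = i := (hL.2 j).1 heq
  have hrdvd : r ∣ m := by
    rw [← hr]
    exact Function.IsPeriodicPt.minimalPeriod_dvd hα
  have : Nat.lcm r s ∣ m := Nat.lcm_dvd hrdvd hsm
  exact absurd (Nat.le_of_dvd hm this) (not_le.mpr hmlt)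
end
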